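/- Let f : 𝕊 → ℂ be continuous. Then: (i) f̂_k = 0 for all k < 0 if and only if f has a continuous extension F : 𝔻̄ → ℂ which is holomorphic on 𝔻; and (ii) f̂_k = 0 for all k ≥ 0 if and only if f has a continuous extension F : {z ∈ ℂ : |z| ≥ 1} → ℂ which is holomorphic on {z : |z| > 1} and satisfies F(z) → 0 as |z| → ∞. -/

import Mathlib

/-!
If the Fourier coefficients of `f` with negative index vanish, then so does the integral of `f`
against the anti-holomorphic part `w̄z / (1 - w̄z)` of the Poisson kernel (expand it as a geometric
series in `w̄z`), so the Poisson integral of `f` is half its Herglotz–Riesz integral plus a constant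
and hence holomorphic in the disk. As the Poisson kernel is a positive approximate identity, the
Poisson integral extends `f` continuously to the closed disk. Conversely, `f̂₋ₙ` is the circle
average of `zⁿ F`, which vanishes by the mean value property.

Part (ii) follows from part (i) applied to `z ↦ f z⁻¹`, whose coefficients are those of `f` in
reverse order; the behaviour at infinity becomes the value at the origin, which is `f̂₀`.
-/

open Metric Filter

/-- The `k`-th Fourier coefficient `∫₀¹ f(e^{2πit}) e^{−2πikt} dt` of a function on the
unit circle (given as a function on `ℂ`, only its values on the circle matter). -/
noncomputable def circleFourierCoeff (f : ℂ → ℂ) (k : ℤ) : ℂ :=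
  ∫ t in (0:ℝ)..1,
    f (Complex.exp (2 * (Real.pi : ℂ) * Complex.I * (t : ℂ))) *
      Complex.exp (-(2 * (Real.pi : ℂ) * Complex.I * (k : ℂ) * (t : ℂ)))

open Real Complex Topology ComplexConjugate Set

theorem circleFourierCoeff_eq_circleAverage (f : ℂ → ℂ) (k : ℤ) :
    circleFourierCoeff f k = circleAverage (fun z ↦ z ^ (-k) * f z) 0 1 := by
  have h2π : 2 * π ≠ 0 := by positivity
  have := intervalIntegral.integral_comp_mul_left
    (fun θ ↦ circleMap 0 1 θ ^ (-k) * f (circleMap 0 1 θ)) (a := 0) (b := 1) h2π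
  rw [mul_zero, mul_one] at this
  rw [circleAverage_def, ← this]
  refine intervalIntegral.integral_congr fun t _ ↦ ?_
  simp only [circleMap, zero_add, ofReal_one, one_mul, ← exp_int_mul]
  rw [mul_comm]
  congr 3 <;> push_cast <;> ring

theorem circleFourierCoeff_comp_inv (f : ℂ → ℂ) (k : ℤ) :
    circleFourierCoeff (fun z ↦ f z⁻¹) k = circleFourierCoeff f (-k) := by
  simp only [circleFourierCoeff_eq_circleAverage, neg_neg]
  rw [← circleAverage_zero_one_congr_inv]
  simp [inv_zpow']

theorem circleFourierCoeff_neg_natCast (f : ℂ → ℂ) (n : ℕ) :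
    circleFourierCoeff f (-n) = circleAverage (fun z ↦ z ^ n * f z) 0 1 := by
  simp [circleFourierCoeff_eq_circleAverage]

theorem circleAverage_pow_mul_eq_zero {G : ℂ → ℂ} (hc : ContinuousOn G (closedBall 0 1))
    (hd : DifferentiableOn ℂ G (ball 0 1 \ {0})) (h0 : G 0 = 0) (n : ℕ) :
    circleAverage (fun z ↦ z ^ n * G z) 0 1 = 0 := by
  rw [circleAverage_of_differentiable_on_off_countable (Set.countable_singleton 0), h0, mul_zero]
  · simpa using (continuousOn_pow n).fun_mul hc
  · intro z hz
    rw [abs_one] at hz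
    exact (differentiableAt_pow n).mul
      (hd.differentiableAt ((isOpen_ball.sdiff isClosed_singleton).mem_nhds hz))

section circleAverage

variable {E : Type*} [NormedAddCommGroup E] [NormedSpace ℝ E] {c : ℂ} {R : ℝ}

theorem norm_circleAverage_le (g : ℂ → E) :
    ‖circleAverage g c R‖ ≤ circleAverage (fun z ↦ ‖g z‖) c R := by
  rw [circleAverage_def, circleAverage_def, norm_smul, smul_eq_mul,
    Real.norm_of_nonneg (by positivity)]
  gcongr
  exact intervalIntegral.norm_integral_le_integral_norm two_pi_pos.le

theorem circleAverage_smul_const [CompleteSpace E] (g : ℂ → ℝ) (a : E) :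
    circleAverage (fun z ↦ g z • a) c R = circleAverage g c R • a := by
  rw [circleAverage_def, circleAverage_def, intervalIntegral.integral_smul_const, smul_assoc]

end circleAverage

theorem poissonKernel_nonneg {c w z : ℂ} (h : ‖w - c‖ ≤ ‖z - c‖) : 0 ≤ poissonKernel c w z :=
  div_nonneg (sub_nonneg.2 (pow_le_pow_left₀ (norm_nonneg _) h 2)) (sq_nonneg _)

theorem circleAverage_poissonKernel {c w : ℂ} {R : ℝ} (hw : w ∈ ball c R) :
    circleAverage (poissonKernel c w) c R = 1 := by
  have := (InnerProductSpace.harmonicOnNhd_const (1 : ℝ)).circleAverage_poissonKernel_smul hw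
  rwa [smul_eq_mul, ← Pi.one_def, mul_one] at this

theorem continuousOn_poissonKernel {c w : ℂ} {R : ℝ} (hw : w ∈ ball c R) :
    ContinuousOn (poissonKernel c w) (sphere c |R|) := by
  rw [poissonKernel_eq_re_herglotzRieszKernel]
  exact continuous_re.comp_continuousOn (continuousOn_herglotzRieszKernel_sphere hw)

theorem poissonKernel_le_of_le_norm_sub {w z z₀ : ℂ} {δ : ℝ} (hz : ‖z‖ = 1) (hz₀ : ‖z₀‖ = 1)
    (hδ : 0 < δ) (hfar : δ ≤ ‖z - z₀‖) (hnear : ‖w - z₀‖ ≤ δ / 2) :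
    poissonKernel 0 w z ≤ 8 * ‖w - z₀‖ / δ ^ 2 := by
  have hzw : δ / 2 ≤ ‖z - w‖ := by
    have := norm_sub_le_norm_sub_add_norm_sub z w z₀
    linarith
  have hnum : 1 - ‖w‖ ^ 2 ≤ 2 * ‖w - z₀‖ := by
    have := norm_sub_norm_le z₀ w
    rw [hz₀, norm_sub_rev] at this
    nlinarith [norm_nonneg w, norm_nonneg (w - z₀)]
  rw [poissonKernel_def, sub_zero, sub_zero, hz, one_pow,
    div_le_div_iff₀ (by nlinarith) (by positivity)]
  nlinarith [norm_nonneg (w - z₀), mul_le_mul hzw hzw (by positivity) (norm_nonneg _)]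

theorem ofReal_poissonKernel_zero_eq {w z : ℂ} (hz : ‖z‖ = 1) (hw : ‖w‖ < 1) :
    (poissonKernel 0 w z : ℂ) =
      (herglotzRieszKernel 0 w z + 1) / 2 + conj w * z / (1 - conj w * z) := by
  have hz0 : z ≠ 0 := norm_ne_zero_iff.1 (by rw [hz]; exact one_ne_zero)
  have hzw : z - w ≠ 0 := fun h ↦ by rw [sub_eq_zero.1 h] at hz; linarith
  have hwz : 1 - conj w * z ≠ 0 := fun h ↦ by
    have := congrArg norm (sub_eq_zero.1 h)
    rw [norm_one, norm_mul, RCLike.norm_conj, hz, mul_one] at this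
    linarith
  have hconj : conj z = z⁻¹ := (RCLike.inv_eq_conj hz).symm
  rw [poissonKernel_eq_re_herglotzRieszKernel, Function.comp_apply, re_eq_add_conj,
    herglotzRieszKernel_def]
  simp only [sub_zero, map_div₀, map_add, map_sub, hconj]
  have hzw' : z⁻¹ - conj w ≠ 0 := by
    rw [← hconj, ← map_sub]
    exact (map_ne_zero _).2 hzw
  have hwz' : 1 - z * conj w ≠ 0 := by rwa [mul_comm]
  field_simp
  ring

theorem circleAverage_mul_geom_eq_zero {g : ℂ → ℂ} (hg : ContinuousOn g (sphere 0 1))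
    (h : ∀ n : ℕ, circleAverage (fun z ↦ z ^ (n + 1) * g z) 0 1 = 0) {a : ℂ} (ha : ‖a‖ < 1) :
    circleAverage (fun z ↦ a * z / (1 - a * z) * g z) 0 1 = 0 := by
  obtain ⟨M, hM⟩ := (isCompact_sphere (0 : ℂ) 1).exists_bound_of_continuousOn hg
  have hγ : ∀ θ, circleMap 0 1 θ ∈ sphere (0 : ℂ) 1 := circleMap_mem_sphere 0 zero_le_one
  have hgγ : Continuous fun θ ↦ g (circleMap 0 1 θ) :=
    hg.comp_continuous (continuous_circleMap 0 1) hγ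
  have hterm : ∀ n : ℕ,
      ∫ θ in 0..2 * π, (a * circleMap 0 1 θ) ^ (n + 1) * g (circleMap 0 1 θ) = 0 := by
    intro n
    have := h n
    rw [circleAverage_def, smul_eq_zero, or_iff_right (by positivity)] at this
    simp_rw [mul_pow, mul_assoc]
    rw [intervalIntegral.integral_const_mul, this, mul_zero]
  have hsum : HasSum
      (fun n : ℕ ↦ ∫ θ in 0..2 * π, (a * circleMap 0 1 θ) ^ (n + 1) * g (circleMap 0 1 θ))
      (∫ θ in 0..2 * π, a * circleMap 0 1 θ / (1 - a * circleMap 0 1 θ) *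
        g (circleMap 0 1 θ)) := by
    refine intervalIntegral.hasSum_integral_of_dominated_convergence
      (fun n _ ↦ M * ‖a‖ ^ (n + 1)) (fun n ↦ ?_) (fun n ↦ ?_) ?_ ?_ ?_
    · exact (((continuous_const.mul (continuous_circleMap 0 1)).pow _).mul
        hgγ).aestronglyMeasurable
    · refine MeasureTheory.ae_of_all _ fun θ _ ↦ ?_
      rw [norm_mul, norm_pow, norm_mul, norm_circleMap_zero, abs_one, mul_one, mul_comm]
      exact mul_le_mul_of_nonneg_right (hM _ (hγ θ)) (by positivity)
    · exact MeasureTheory.ae_of_all _ fun θ _ ↦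
        (summable_geometric_of_lt_one (norm_nonneg a) ha).mul_left (M * ‖a‖) |>.congr
          fun n ↦ by ring
    · exact intervalIntegrable_const
    · refine MeasureTheory.ae_of_all _ fun θ _ ↦ ?_
      have hξ : ‖a * circleMap 0 1 θ‖ < 1 := by
        rwa [norm_mul, norm_circleMap_zero, abs_one, mul_one]
      have := ((hasSum_geometric_of_norm_lt_one hξ).mul_left (a * circleMap 0 1 θ)).mul_right
        (g (circleMap 0 1 θ))
      simpa only [← pow_succ', div_eq_mul_inv] using this
  rw [circleAverage_def, hsum.unique (by simpa only [hterm] using hasSum_zero), smul_zero]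

noncomputable def poissonIntegral (f : ℂ → ℂ) (w : ℂ) : ℂ :=
  circleAverage (poissonKernel 0 w • f) 0 1

theorem poissonIntegral_eq_herglotzRiesz {f : ℂ → ℂ} (hf : ContinuousOn f (sphere 0 1))
    (h : ∀ n : ℕ, circleAverage (fun z ↦ z ^ (n + 1) * f z) 0 1 = 0) {w : ℂ}
    (hw : w ∈ ball 0 1) :
    poissonIntegral f w =
      (circleAverage (fun z ↦ herglotzRieszKernel 0 w z • f z) 0 1 + circleAverage f 0 1) / 2 := by
  have hw' : ‖conj w‖ < 1 := by rwa [RCLike.norm_conj, ← mem_ball_zero_iff]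
  have hH : ContinuousOn (herglotzRieszKernel 0 w) (sphere 0 1) := by
    simpa using continuousOn_herglotzRieszKernel_sphere (R := 1) hw
  have hHf : CircleIntegrable (fun z ↦ herglotzRieszKernel 0 w z • f z) 0 1 :=
    (hH.smul hf).circleIntegrable zero_le_one
  have hf' : CircleIntegrable f 0 1 := hf.circleIntegrable zero_le_one
  have hden : ∀ z ∈ sphere (0 : ℂ) 1, 1 - conj w * z ≠ 0 := fun z hz h ↦ by
    have := congrArg norm (sub_eq_zero.1 h)
    rw [norm_one, norm_mul, mem_sphere_zero_iff_norm.1 hz, mul_one] at this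
    linarith
  have htail : CircleIntegrable (fun z ↦ conj w * z / (1 - conj w * z) * f z) 0 1 :=
    ContinuousOn.circleIntegrable zero_le_one <| ((continuousOn_const.mul continuousOn_id).div
      (continuousOn_const.sub (continuousOn_const.mul continuousOn_id)) hden).mul hf
  calc poissonIntegral f w
      = circleAverage (fun z ↦ (2⁻¹ : ℂ) • (herglotzRieszKernel 0 w z • f z + f z) +
          conj w * z / (1 - conj w * z) * f z) 0 1 := by
        refine circleAverage_congr_sphere fun z hz ↦ ?_
        rw [abs_one, mem_sphere_zero_iff_norm] at hz
        simp only [Pi.smul_apply', Complex.real_smul, smul_eq_mul,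
          ofReal_poissonKernel_zero_eq hz (mem_ball_zero_iff.1 hw)]
        ring
    _ = _ := by
        rw [circleAverage_fun_add
          (f₁ := fun z ↦ (2⁻¹ : ℂ) • (herglotzRieszKernel 0 w z • f z + f z))
          (hHf.add hf').const_smul htail, circleAverage_fun_smul,
          circleAverage_fun_add hHf hf', circleAverage_mul_geom_eq_zero hf h hw', add_zero,
          smul_eq_mul, inv_mul_eq_div]

theorem differentiableOn_poissonIntegral {f : ℂ → ℂ} (hf : ContinuousOn f (sphere 0 1))
    (h : ∀ n : ℕ, circleAverage (fun z ↦ z ^ (n + 1) * f z) 0 1 = 0) :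
    DifferentiableOn ℂ (poissonIntegral f) (ball 0 1) :=
  (((differentiableOn_circleAverage_herglotzRieszKernel_smul
    (hf.circleIntegrable zero_le_one)).add_const _).div_const 2).congr
    fun _ hw ↦ poissonIntegral_eq_herglotzRiesz hf h hw

theorem poissonIntegral_sub {f : ℂ → ℂ} (hf : ContinuousOn f (sphere 0 1)) {w : ℂ}
    (hw : w ∈ ball 0 1) (a : ℂ) :
    poissonIntegral f w - a = circleAverage (fun z ↦ poissonKernel 0 w z • (f z - a)) 0 1 := by
  have hP : ContinuousOn (poissonKernel 0 w) (sphere 0 1) := by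
    simpa using continuousOn_poissonKernel hw
  simp only [smul_sub]
  rw [circleAverage_fun_sub (f₁ := fun z ↦ poissonKernel 0 w z • f z)
    (f₂ := fun z ↦ poissonKernel 0 w z • a) ((hP.smul hf).circleIntegrable zero_le_one)
    ((hP.smul continuousOn_const).circleIntegrable zero_le_one), circleAverage_smul_const,
    circleAverage_poissonKernel hw, one_smul]
  rfl

theorem norm_poissonIntegral_sub_le {f : ℂ → ℂ} (hf : ContinuousOn f (sphere 0 1)) {w z₀ : ℂ}
    (hw : w ∈ ball 0 1) (hz₀ : z₀ ∈ sphere 0 1) {δ ε B : ℝ} (hδ : 0 < δ)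
    (hnear : ‖w - z₀‖ ≤ δ / 2) (hε : ∀ z ∈ sphere 0 1, ‖z - z₀‖ < δ → ‖f z - f z₀‖ ≤ ε)
    (hB : ∀ z ∈ sphere 0 1, ‖f z - f z₀‖ ≤ B) :
    ‖poissonIntegral f w - f z₀‖ ≤ ε + B * (8 * ‖w - z₀‖ / δ ^ 2) := by
  set K := 8 * ‖w - z₀‖ / δ ^ 2
  have hK : 0 ≤ K := by positivity
  have hP : ContinuousOn (poissonKernel 0 w) (sphere 0 1) := by
    simpa using continuousOn_poissonKernel hw
  have hPnn : ∀ z ∈ sphere (0 : ℂ) 1, 0 ≤ poissonKernel 0 w z := fun z hz ↦ poissonKernel_nonneg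
    (by simpa [mem_sphere_zero_iff_norm.1 hz] using (mem_ball_zero_iff.1 hw).le)
  have hpt : ∀ z ∈ sphere (0 : ℂ) |1|,
      ‖poissonKernel 0 w z • (f z - f z₀)‖ ≤ ε * poissonKernel 0 w z + B * K := by
    intro z hz
    rw [abs_one] at hz
    rw [norm_smul, Real.norm_of_nonneg (hPnn z hz)]
    by_cases hzz : ‖z - z₀‖ < δ
    · have hB0 : 0 ≤ B := (norm_nonneg _).trans (hB z hz)
      nlinarith [mul_le_mul_of_nonneg_left (hε z hz hzz) (hPnn z hz), mul_nonneg hB0 hK]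
    · have hε0 : 0 ≤ ε := (norm_nonneg _).trans (hε z₀ hz₀ (by simpa using hδ))
      have hfar := poissonKernel_le_of_le_norm_sub (mem_sphere_zero_iff_norm.1 hz)
        (mem_sphere_zero_iff_norm.1 hz₀) hδ (not_lt.1 hzz) hnear
      nlinarith [mul_le_mul hfar (hB z hz) (norm_nonneg _) hK, mul_nonneg hε0 (hPnn z hz)]
  have hεP : circleAverage (fun z ↦ ε * poissonKernel 0 w z) 0 1 = ε := by
    simpa [circleAverage_poissonKernel hw] using
      circleAverage_fun_smul (a := ε) (f := poissonKernel 0 w) (c := 0) (R := 1)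
  have hεPi : CircleIntegrable (fun z ↦ ε * poissonKernel 0 w z) 0 1 :=
    (continuousOn_const.fun_mul hP).circleIntegrable zero_le_one
  calc ‖poissonIntegral f w - f z₀‖
      ≤ circleAverage (fun z ↦ ‖poissonKernel 0 w z • (f z - f z₀)‖) 0 1 := by
        rw [poissonIntegral_sub hf hw]
        exact norm_circleAverage_le _
    _ ≤ circleAverage (fun z ↦ ε * poissonKernel 0 w z + B * K) 0 1 :=
        circleAverage_mono
          ((hP.smul (hf.sub continuousOn_const)).norm.circleIntegrable zero_le_one)
          (hεPi.add (circleIntegrable_const _ _ _)) hpt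
    _ = ε + B * K := by
        rw [circleAverage_fun_add hεPi (circleIntegrable_const _ _ _), hεP, circleAverage_const]

open Classical in
noncomputable def poissonExtension (f : ℂ → ℂ) (w : ℂ) : ℂ :=
  if w ∈ ball 0 1 then poissonIntegral f w else f w

theorem poissonExtension_of_mem_ball {f : ℂ → ℂ} {w : ℂ} (hw : w ∈ ball 0 1) :
    poissonExtension f w = poissonIntegral f w := if_pos hw

theorem poissonExtension_of_mem_sphere {f : ℂ → ℂ} {w : ℂ} (hw : w ∈ sphere 0 1) :
    poissonExtension f w = f w :=
  if_neg (by simp [mem_sphere_zero_iff_norm.1 hw])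

theorem continuousWithinAt_poissonExtension {f : ℂ → ℂ} (hf : ContinuousOn f (sphere 0 1))
    {z₀ : ℂ} (hz₀ : z₀ ∈ sphere 0 1) :
    ContinuousWithinAt (poissonExtension f) (closedBall 0 1) z₀ := by
  obtain ⟨B, hB⟩ := (isCompact_sphere (0 : ℂ) 1).exists_bound_of_continuousOn
    (hf.sub continuousOn_const)
  rw [ContinuousWithinAt, poissonExtension_of_mem_sphere hz₀, Metric.tendsto_nhds]
  intro ε hε
  obtain ⟨δ, hδ, hfδ⟩ := Metric.continuousWithinAt_iff.1 (hf z₀ hz₀) (ε / 2) (half_pos hε)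
  have hlim : Tendsto (fun w ↦ ε / 2 + B * (8 * ‖w - z₀‖ / δ ^ 2)) (𝓝 z₀) (𝓝 (ε / 2)) := by
    have : Continuous (fun w : ℂ ↦ ε / 2 + B * (8 * ‖w - z₀‖ / δ ^ 2)) := by fun_prop
    simpa using this.tendsto z₀
  filter_upwards [self_mem_nhdsWithin,
    nhdsWithin_le_nhds (hlim.eventually (gt_mem_nhds (half_lt_self hε))),
    nhdsWithin_le_nhds (ball_mem_nhds z₀ (half_pos hδ))] with w hw hlt hnear
  rw [mem_ball, dist_eq_norm] at hnear
  rcases (mem_closedBall.1 hw).lt_or_eq with hlt1 | heq1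
  · have hwb : w ∈ ball 0 1 := mem_ball.2 hlt1
    rw [poissonExtension_of_mem_ball hwb, dist_eq_norm]
    refine lt_of_le_of_lt (norm_poissonIntegral_sub_le hf hwb hz₀ hδ hnear.le ?_ ?_) hlt
    · exact fun z hz hzδ ↦ by simpa [dist_eq_norm] using (hfδ hz (by rwa [dist_eq_norm])).le
    · exact fun z hz ↦ hB z hz
  · have hws : w ∈ sphere 0 1 := heq1
    rw [poissonExtension_of_mem_sphere hws]
    exact (hfδ hws (by rw [dist_eq_norm]; linarith)).trans (half_lt_self hε)

theorem diffContOnCl_poissonExtension {f : ℂ → ℂ} (hf : ContinuousOn f (sphere 0 1))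
    (h : ∀ n : ℕ, circleAverage (fun z ↦ z ^ (n + 1) * f z) 0 1 = 0) :
    DiffContOnCl ℂ (poissonExtension f) (ball 0 1) := by
  have hd : DifferentiableOn ℂ (poissonExtension f) (ball 0 1) :=
    (differentiableOn_poissonIntegral hf h).congr fun _ hw ↦ poissonExtension_of_mem_ball hw
  refine ⟨hd, ?_⟩
  rw [closure_ball 0 one_ne_zero]
  intro w hw
  rcases (mem_closedBall.1 hw).lt_or_eq with hlt | heq
  · exact (hd.differentiableAt (isOpen_ball.mem_nhds (mem_ball.2 hlt))).continuousAt
      |>.continuousWithinAt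
  · exact continuousWithinAt_poissonExtension hf heq

theorem mapsTo_inv_sphere : MapsTo (·⁻¹) (sphere (0 : ℂ) 1) (sphere 0 1) :=
  fun z hz ↦ by simpa using hz

theorem mapsTo_inv_closedBall : MapsTo (·⁻¹) {z : ℂ | 1 ≤ ‖z‖} (closedBall 0 1) :=
  fun z hz ↦ by simpa using inv_le_one_of_one_le₀ hz

theorem mapsTo_inv_ball : MapsTo (·⁻¹) {z : ℂ | 1 < ‖z‖} (ball 0 1) :=
  fun z hz ↦ by simpa using inv_lt_one_of_one_lt₀ hz

theorem mapsTo_inv_closedBall_diff : MapsTo (·⁻¹) (closedBall (0 : ℂ) 1 \ {0}) {z | 1 ≤ ‖z‖} :=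
  fun z hz ↦ by simpa using one_le_inv_iff₀.2 ⟨norm_pos_iff.2 hz.2, mem_closedBall_zero_iff.1 hz.1⟩

theorem mapsTo_inv_ball_diff : MapsTo (·⁻¹) (ball (0 : ℂ) 1 \ {0}) {z | 1 < ‖z‖} :=
  fun z hz ↦ by simpa using one_lt_inv_iff₀.2 ⟨norm_pos_iff.2 hz.2, mem_ball_zero_iff.1 hz.1⟩

theorem DiffContOnCl.continuousOn_comp_inv {G : ℂ → ℂ} (hG : DiffContOnCl ℂ G (ball 0 1)) :
    ContinuousOn (fun z ↦ G z⁻¹) {z | 1 ≤ ‖z‖} := by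
  refine hG.continuousOn.comp
    (continuousOn_inv₀.mono fun _ hz ↦ norm_pos_iff.1 (one_pos.trans_le hz)) ?_
  rw [closure_ball 0 one_ne_zero]
  exact mapsTo_inv_closedBall

theorem DiffContOnCl.differentiableOn_comp_inv {G : ℂ → ℂ} (hG : DiffContOnCl ℂ G (ball 0 1)) :
    DifferentiableOn ℂ (fun z ↦ G z⁻¹) {z | 1 < ‖z‖} :=
  hG.differentiableOn.comp (differentiableOn_inv.mono fun _ hz ↦ norm_pos_iff.1 (one_pos.trans hz))
    mapsTo_inv_ball

theorem DiffContOnCl.tendsto_comp_inv {G : ℂ → ℂ} (hG : DiffContOnCl ℂ G (ball 0 1)) :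
    Tendsto (fun z ↦ G z⁻¹) (comap norm atTop) (𝓝 (G 0)) := by
  have hG0 : ContinuousWithinAt G (closedBall 0 1) 0 := by
    rw [← closure_ball 0 one_ne_zero]
    exact hG.continuousOn _ (subset_closure (mem_ball_self one_pos))
  refine hG0.tendsto.comp (tendsto_nhdsWithin_iff.2 ⟨?_, ?_⟩)
  · rw [comap_norm_atTop]
    exact tendsto_inv₀_cobounded
  · exact (tendsto_comap.eventually (eventually_ge_atTop 1)).mono
      fun _ hz ↦ mapsTo_inv_closedBall hz

theorem continuousOn_update_comp_inv {F : ℂ → ℂ} {a : ℂ} (hF : ContinuousOn F {z | 1 ≤ ‖z‖})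
    (hFa : Tendsto F (comap norm atTop) (𝓝 a)) :
    ContinuousOn (Function.update (fun w ↦ F w⁻¹) 0 a) (closedBall 0 1) := by
  refine continuousOn_update_iff.2 ⟨hF.comp (continuousOn_inv₀.mono fun _ hz ↦ hz.2)
    mapsTo_inv_closedBall_diff, fun _ ↦ ?_⟩
  rw [comap_norm_atTop] at hFa
  exact hFa.comp (tendsto_inv₀_nhdsNE_zero.mono_left (nhdsWithin_mono _ fun _ hz ↦ hz.2))

theorem differentiableOn_update_comp_inv {F : ℂ → ℂ} {a : ℂ}
    (hF : DifferentiableOn ℂ F {z | 1 < ‖z‖}) :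
    DifferentiableOn ℂ (Function.update (fun w ↦ F w⁻¹) 0 a) (ball 0 1 \ {0}) :=
  (hF.comp (differentiableOn_inv.mono fun _ hz ↦ hz.2) mapsTo_inv_ball_diff).congr
    fun _ hw ↦ Function.update_of_ne hw.2 _ _

theorem exists_extension_disk_of_circleFourierCoeff_neg {f : ℂ → ℂ}
    (hf : ContinuousOn f (sphere 0 1))
    (h : ∀ k : ℤ, k < 0 → circleFourierCoeff f k = 0) :
    ∃ F : ℂ → ℂ, DiffContOnCl ℂ F (ball 0 1) ∧ EqOn F f (sphere 0 1) := by
  refine ⟨poissonExtension f, diffContOnCl_poissonExtension hf fun n ↦ ?_,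
    fun _ ↦ poissonExtension_of_mem_sphere⟩
  rw [← circleFourierCoeff_neg_natCast]
  exact h _ (by omega)

theorem circleFourierCoeff_neg_eq_zero_of_extension_disk {f F : ℂ → ℂ}
    (hc : ContinuousOn F (closedBall 0 1)) (hd : DifferentiableOn ℂ F (ball 0 1))
    (hFf : EqOn F f (sphere 0 1)) {k : ℤ} (hk : k < 0) : circleFourierCoeff f k = 0 := by
  obtain ⟨n, rfl⟩ : ∃ n : ℕ, k = -(n + 1 : ℕ) := ⟨(-k - 1).toNat, by omega⟩
  rw [circleFourierCoeff_neg_natCast]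
  calc circleAverage (fun z ↦ z ^ (n + 1) * f z) 0 1
      = circleAverage (fun z ↦ z ^ n * (z * F z)) 0 1 :=
        circleAverage_congr_sphere fun z hz ↦ by
          rw [abs_one] at hz
          rw [hFf hz]
          ring
    _ = 0 := circleAverage_pow_mul_eq_zero (continuousOn_id.fun_mul hc)
        ((differentiableOn_id.fun_mul hd).mono sdiff_subset) (zero_mul _) n

theorem exists_extension_exterior_of_circleFourierCoeff_nonneg {f : ℂ → ℂ}
    (hf : ContinuousOn f (sphere 0 1)) (h : ∀ k : ℤ, 0 ≤ k → circleFourierCoeff f k = 0) :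
    ∃ F : ℂ → ℂ, ContinuousOn F {z | 1 ≤ ‖z‖} ∧ DifferentiableOn ℂ F {z | 1 < ‖z‖} ∧
      EqOn F f (sphere 0 1) ∧ Tendsto F (comap norm atTop) (𝓝 0) := by
  have hg : ContinuousOn (fun z ↦ f z⁻¹) (sphere 0 1) :=
    hf.comp (continuousOn_inv₀.mono fun z hz ↦ ne_zero_of_mem_sphere one_ne_zero ⟨z, hz⟩)
      mapsTo_inv_sphere
  obtain ⟨G, hG, hGg⟩ := exists_extension_disk_of_circleFourierCoeff_neg hg fun k hk ↦ by
    rw [circleFourierCoeff_comp_inv]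
    exact h _ (by omega)
  have hG0 : G 0 = 0 := by
    rw [← (show DiffContOnCl ℂ G (ball 0 |1|) by rwa [abs_one]).circleAverage,
      circleAverage_congr_sphere (by rwa [abs_one]), circleAverage_zero_one_congr_inv]
    simpa [circleFourierCoeff_eq_circleAverage] using h 0 le_rfl
  refine ⟨fun z ↦ G z⁻¹, hG.continuousOn_comp_inv, hG.differentiableOn_comp_inv,
    fun z hz ↦ ?_, hG0 ▸ hG.tendsto_comp_inv⟩
  simp only [hGg (mapsTo_inv_sphere hz), inv_inv]

theorem circleFourierCoeff_nonneg_eq_zero_of_extension_exterior {f F : ℂ → ℂ}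
    (hc : ContinuousOn F {z | 1 ≤ ‖z‖}) (hd : DifferentiableOn ℂ F {z | 1 < ‖z‖})
    (hFf : EqOn F f (sphere 0 1)) (hF : Tendsto F (comap norm atTop) (𝓝 0)) {k : ℤ}
    (hk : 0 ≤ k) : circleFourierCoeff f k = 0 := by
  obtain ⟨n, rfl⟩ := Int.eq_ofNat_of_zero_le hk
  rw [← neg_neg (n : ℤ), ← circleFourierCoeff_comp_inv, circleFourierCoeff_neg_natCast]
  calc circleAverage (fun z ↦ z ^ n * f z⁻¹) 0 1
      = circleAverage (fun z ↦ z ^ n * Function.update (fun w ↦ F w⁻¹) 0 0 z) 0 1 :=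
        circleAverage_congr_sphere fun z hz ↦ by
          rw [abs_one] at hz
          rw [Function.update_of_ne (ne_zero_of_mem_sphere one_ne_zero ⟨z, hz⟩),
            hFf (mapsTo_inv_sphere hz)]
    _ = 0 := circleAverage_pow_mul_eq_zero (continuousOn_update_comp_inv hc hF)
        (differentiableOn_update_comp_inv hd) (Function.update_self ..) n

theorem stmt_3 (f : ℂ → ℂ) (hf : ContinuousOn f {z : ℂ | ‖z‖ = 1}) :
    ((∀ k : ℤ, k < 0 → circleFourierCoeff f k = 0) ↔
      ∃ F : ℂ → ℂ, ContinuousOn F (closedBall 0 1) ∧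
        DifferentiableOn ℂ F (ball 0 1) ∧
        Set.EqOn F f {z : ℂ | ‖z‖ = 1}) ∧
    ((∀ k : ℤ, 0 ≤ k → circleFourierCoeff f k = 0) ↔
      ∃ F : ℂ → ℂ, ContinuousOn F {z : ℂ | 1 ≤ ‖z‖} ∧
        DifferentiableOn ℂ F {z : ℂ | 1 < ‖z‖} ∧
        Set.EqOn F f {z : ℂ | ‖z‖ = 1} ∧
        Tendsto F (comap (fun z : ℂ => ‖z‖) atTop) (nhds 0)) := by
  have hS : {z : ℂ | ‖z‖ = 1} = sphere 0 1 := by ext; simp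
  rw [hS] at hf ⊢
  refine ⟨⟨fun h ↦ ?_, fun ⟨F, hc, hd, hFf⟩ _ ↦
      circleFourierCoeff_neg_eq_zero_of_extension_disk hc hd hFf⟩,
    ⟨exists_extension_exterior_of_circleFourierCoeff_nonneg hf, fun ⟨F, hc, hd, hFf, hF⟩ _ ↦
      circleFourierCoeff_nonneg_eq_zero_of_extension_exterior hc hd hFf hF⟩⟩
  obtain ⟨F, hF, hFf⟩ := exists_extension_disk_of_circleFourierCoeff_neg hf h
  exact ⟨F, closure_ball (0 : ℂ) one_ne_zero ▸ hF.continuousOn, hF.differentiableOn, hFf⟩
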